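/- If D₁ and D₂ are total dominating sets of the fuzzy graphs G and H respectively, then D₁ × D₂ is a total dominating set of the direct product fuzzy graph G × H. -/

import Mathlib

open Finset Classical

noncomputable section

/-- A fuzzy graph on a vertex type `V`: an undirected simple (crisp) adjacency
relation together with membership functions `sig : V → [0,1]` on vertices and
`mu` on edges satisfying `mu {x,y} ≤ min (sig x) (sig y)`. -/
structure FuzzyGraph (V : Type) where
  Adj : V → V → Prop
  symm : ∀ x y, Adj x y → Adj y x
  loopless : ∀ x, ¬ Adj x x
  sig : V → ℝ
  mu : V → V → ℝ
  sig_nonneg : ∀ v, 0 ≤ sig v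
  sig_le_one : ∀ v, sig v ≤ 1
  mu_symm : ∀ x y, mu x y = mu y x
  mu_le : ∀ x y, Adj x y → mu x y ≤ min (sig x) (sig y)

namespace FuzzyGraph

variable {α β : Type}

/-- `x` dominates `y`: they are adjacent and the edge membership attains
`min (sig x) (sig y)`. -/
def Dominates (G : FuzzyGraph α) (x y : α) : Prop :=
  G.Adj x y ∧ G.mu x y = min (G.sig x) (G.sig y)

/-- `S` is a dominating set: every vertex outside `S` is dominated by a member of `S`. -/
def IsDominating (G : FuzzyGraph α) (S : Set α) : Prop :=
  ∀ v ∉ S, ∃ u ∈ S, G.Dominates u v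

/-- `T` is a total dominating set: every vertex is dominated by a member of `T`. -/
def IsTotalDominating (G : FuzzyGraph α) (T : Set α) : Prop :=
  ∀ v, ∃ u ∈ T, G.Dominates u v

/-- The direct product of two fuzzy graphs: `Λ(g,h) = min (σ₁ g) (σ₂ h)` and
`Γ((g₁,h₁),(g₂,h₂)) = min (μ₁ g₁ g₂) (μ₂ h₁ h₂)`, with component-wise adjacency. -/
def prod (G : FuzzyGraph α) (H : FuzzyGraph β) : FuzzyGraph (α × β) where
  Adj p q := G.Adj p.1 q.1 ∧ H.Adj p.2 q.2
  symm _ _ h := ⟨G.symm _ _ h.1, H.symm _ _ h.2⟩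
  loopless _ h := G.loopless _ h.1
  sig p := min (G.sig p.1) (H.sig p.2)
  mu p q := min (G.mu p.1 q.1) (H.mu p.2 q.2)
  sig_nonneg p := le_min (G.sig_nonneg _) (H.sig_nonneg _)
  sig_le_one p := (min_le_left _ _).trans (G.sig_le_one _)
  mu_symm p q := by show min (G.mu p.1 q.1) (H.mu p.2 q.2) = min (G.mu q.1 p.1) (H.mu q.2 p.2); rw [G.mu_symm, H.mu_symm]
  mu_le p q h := by
    have h1 := G.mu_le _ _ h.1
    have h2 := H.mu_le _ _ h.2
    simp only [le_min_iff] at h1 h2 ⊢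
    exact ⟨⟨(min_le_left _ _).trans h1.1, (min_le_right _ _).trans h2.1⟩,
      (min_le_left _ _).trans h1.2, (min_le_right _ _).trans h2.2⟩

/-- Fuzzy cardinality of a finite vertex set. -/
def fc (G : FuzzyGraph α) (S : Finset α) : ℝ := ∑ v ∈ S, G.sig v

/-- The order `p` of a fuzzy graph: sum of all vertex memberships. -/
def order (G : FuzzyGraph α) [Fintype α] : ℝ := ∑ v, G.sig v

/-- Domination number: minimum fuzzy cardinality of a dominating set. -/
noncomputable def domNumber (G : FuzzyGraph α) [Fintype α] : ℝ :=
  sInf {x | ∃ S : Finset α, G.IsDominating ↑S ∧ x = G.fc S}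

/-- Total domination number: minimum fuzzy cardinality of a total dominating set. -/
noncomputable def totalDomNumber (G : FuzzyGraph α) [Fintype α] : ℝ :=
  sInf {x | ∃ T : Finset α, G.IsTotalDominating ↑T ∧ x = G.fc T}

/-- A complete fuzzy graph: every pair of distinct vertices is adjacent with
edge membership attaining the min of the vertex memberships. -/
def IsComplete (G : FuzzyGraph α) : Prop := ∀ x y : α, x ≠ y → G.Dominates x y

/-- The product fuzzy graph `G × H` is complete: any two vertices differing in
both coordinates dominate each other. -/
def IsCompleteProd (G : FuzzyGraph α) (H : FuzzyGraph β) : Prop :=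
  ∀ p q : α × β, p.1 ≠ q.1 → p.2 ≠ q.2 → (G.prod H).Dominates p q

/-- Connectedness of a fuzzy graph (via the crisp adjacency). -/
def Connected (G : FuzzyGraph α) : Prop := ∀ x y : α, Relation.ReflTransGen G.Adj x y

/-- Total `a`-domination number: minimum weight of a nonnegative `f` with
`f(N(v)) ≥ a` for every `v`, where `N(v)` is the (fuzzy) open neighborhood. -/
noncomputable def totalAlphaDomNumber (G : FuzzyGraph α) [Fintype α] (a : ℝ) : ℝ :=
  sInf {w | ∃ f : α → ℝ, (∀ v, 0 ≤ f v) ∧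
    (∀ v, a ≤ ∑ u ∈ univ.filter (fun u => G.Dominates u v), f u) ∧ w = ∑ v, f v}

/-- `a`-domination number (closed neighborhoods `N[v]`). -/
noncomputable def alphaDomNumber (G : FuzzyGraph α) [Fintype α] (a : ℝ) : ℝ :=
  sInf {w | ∃ f : α → ℝ, (∀ v, 0 ≤ f v) ∧
    (∀ v, a ≤ ∑ u ∈ univ.filter (fun u => u = v ∨ G.Dominates u v), f u) ∧ w = ∑ v, f v}

end FuzzyGraph

theorem FuzzyGraph.Dominates.prod {α β : Type} {G : FuzzyGraph α} {H : FuzzyGraph β}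
    {u a : α} {v b : β} (hG : G.Dominates u a) (hH : H.Dominates v b) : (G.prod H).Dominates (u, v) (a, b) := by
  refine ⟨⟨hG.1, hH.1⟩, ?_⟩
  show min (G.mu u a) (H.mu v b) = min (min (G.sig u) (H.sig v)) (min (G.sig a) (H.sig b))
  rw [hG.2, hH.2, min_min_min_comm]

/-- If `D₁` and `D₂` are total dominating sets of `G` and `H`, then
`D₁ × D₂` is a total dominating set of the direct product fuzzy graph `G × H`. -/
theorem prod_total_dominating {α β : Type} (G : FuzzyGraph α) (H : FuzzyGraph β)
    (D₁ : Set α) (D₂ : Set β)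
    (h₁ : G.IsTotalDominating D₁) (h₂ : H.IsTotalDominating D₂) :
    (G.prod H).IsTotalDominating (D₁ ×ˢ D₂) := by
  rintro ⟨a, b⟩
  obtain ⟨u, hu, hua⟩ := h₁ a
  obtain ⟨v, hv, hvb⟩ := h₂ b
  exact ⟨(u, v), ⟨hu, hv⟩, hua.prod hvb⟩
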